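/- arXiv:2110.05323 — 3 statements merged into one kernel-verified Lean document; each statement's English description precedes it below -/
import Mathlib

section
/- Let n : ℕ, let f : EuclideanSpace ℝ (Fin n) → ℝ be differentiable with L-Lipschitz gradient (L ≥ 0), let S be a finite set of coordinates, and let (Ω, μ) be a probability space. Let g : Ω → EuclideanSpace ℝ (Fin n) with ω ↦ (g ω)∣S integrable, ω ↦ ‖(g ω)∣S‖^2 integrable, and ω ↦ f (x - γ • (g ω)∣S) integrable. Let d := ∫ (g ω)∣S ∂μ and assume ∫ ‖(g ω)∣S - d‖^2 ∂μ ≤ σ^2. Then for every γ : ℝ, ∫ f (x - γ • (g ω)∣S) ∂μ ≤ f x - γ * ⟪(gradient f x)∣S, d⟫ + (γ^2 * L / 2) * (‖d‖^2 + σ^2). -/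
/-!
Smoothness gives the quadratic upper bound `f (x + v) ≤ f x + ⟪∇f x, v⟫ + L / 2 * ‖v‖ ^ 2`.
Taking `v = -γ • u ω` and integrating bounds the expected value by the second moment
`∫ ‖u‖²`, which is `‖d‖²` plus the variance. Since `d` is a mean of masked vectors it is itself
masked, so the inner product with `∇f x` only sees the masked gradient.
-/

open MeasureTheory

/-- The masked vector `x∣S`: keeps coordinates in `S`, zeroes out the rest. -/
def mask {n : ℕ} (S : Finset (Fin n)) (x : EuclideanSpace ℝ (Fin n)) :
    EuclideanSpace ℝ (Fin n) :=
  WithLp.toLp 2 (fun i => if i ∈ S then x i else 0)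

open scoped RealInnerProductSpace

section LipschitzGradient

variable {E : Type*} [NormedAddCommGroup E] [InnerProductSpace ℝ E] [CompleteSpace E]
  {f : E → ℝ} {L : ℝ}

theorem image_add_le_of_lipschitz_gradient (hdiff : Differentiable ℝ f)
    (hlip : ∀ x y, ‖gradient f x - gradient f y‖ ≤ L * ‖x - y‖) (x v : E) :
    f (x + v) ≤ f x + ⟪gradient f x, v⟫ + L / 2 * ‖v‖ ^ 2 := by
  set φ : ℝ → ℝ := fun t => f (x + t • v) - t * ⟪gradient f x, v⟫ - L / 2 * t ^ 2 * ‖v‖ ^ 2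
  have hφ : ∀ t, HasDerivAt φ
      (⟪gradient f (x + t • v), v⟫ - ⟪gradient f x, v⟫ - L * t * ‖v‖ ^ 2) t := by
    intro t
    have hline : HasDerivAt (fun t : ℝ => x + t • v) v t := by
      simpa using ((hasDerivAt_id t).smul_const v).const_add x
    have hf := (hdiff (x + t • v)).hasGradientAt.hasFDerivAt.comp_hasDerivAt t hline
    simp only [InnerProductSpace.toDual_apply_apply] at hf
    have h := (hf.sub ((hasDerivAt_id t).mul_const ⟪gradient f x, v⟫)).sub
      (((hasDerivAt_pow 2 t).const_mul (L / 2)).mul_const (‖v‖ ^ 2))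
    exact h.congr_deriv (by push_cast; ring)
  have hanti : AntitoneOn φ (Set.Ici 0) := by
    refine antitoneOn_of_hasDerivWithinAt_nonpos (convex_Ici 0)
      (fun t _ => (hφ t).continuousAt.continuousWithinAt) (fun t _ => (hφ t).hasDerivWithinAt) ?_
    intro t ht
    rw [interior_Ici] at ht
    have hgrad : ‖gradient f (x + t • v) - gradient f x‖ ≤ L * (t * ‖v‖) := by
      simpa [norm_smul, abs_of_pos (Set.mem_Ioi.mp ht)] using hlip (x + t • v) x
    have hcs := real_inner_le_norm (gradient f (x + t • v) - gradient f x) v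
    rw [inner_sub_left] at hcs
    nlinarith [mul_le_mul_of_nonneg_right hgrad (norm_nonneg v)]
  have h01 := hanti Set.self_mem_Ici (Set.mem_Ici.mpr zero_le_one) zero_le_one
  simp only [φ, zero_smul, one_smul, add_zero, zero_mul, one_mul, sub_zero] at h01
  linarith

variable {Ω : Type*} [MeasurableSpace Ω] {μ : Measure Ω} [IsProbabilityMeasure μ] {u : Ω → E}

theorem integral_norm_sub_integral_sq (hu : Integrable u μ)
    (hu₂ : Integrable (fun ω => ‖u ω‖ ^ 2) μ) :
    ∫ ω, ‖u ω - ∫ ω', u ω' ∂μ‖ ^ 2 ∂μ = ∫ ω, ‖u ω‖ ^ 2 ∂μ - ‖∫ ω, u ω ∂μ‖ ^ 2 := by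
  set m := ∫ ω, u ω ∂μ
  have hinner : Integrable (fun ω => 2 * ⟪u ω, m⟫) μ := (hu.inner_const m).const_mul 2
  have hmean : ∫ ω, ⟪u ω, m⟫ ∂μ = ‖m‖ ^ 2 := by
    simp_rw [real_inner_comm m]
    rw [integral_inner hu, real_inner_self_eq_norm_sq]
  simp_rw [norm_sub_sq_real]
  rw [integral_add (f := fun ω => ‖u ω‖ ^ 2 - 2 * ⟪u ω, m⟫) (hu₂.sub hinner)
    (integrable_const _), integral_sub hu₂ hinner, integral_const_mul, hmean, integral_const,
    probReal_univ, one_smul]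
  ring

theorem integral_image_sub_smul_le (hdiff : Differentiable ℝ f)
    (hlip : ∀ x y, ‖gradient f x - gradient f y‖ ≤ L * ‖x - y‖) (x : E) (γ : ℝ)
    (hu : Integrable u μ) (hu₂ : Integrable (fun ω => ‖u ω‖ ^ 2) μ)
    (hf : Integrable (fun ω => f (x - γ • u ω)) μ) :
    ∫ ω, f (x - γ • u ω) ∂μ ≤
      f x - γ * ⟪gradient f x, ∫ ω, u ω ∂μ⟫ + γ ^ 2 * L / 2 * ∫ ω, ‖u ω‖ ^ 2 ∂μ := by
  have hstep : ∀ ω, f (x - γ • u ω) ≤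
      f x - γ * ⟪gradient f x, u ω⟫ + γ ^ 2 * L / 2 * ‖u ω‖ ^ 2 := fun ω => by
    have h := image_add_le_of_lipschitz_gradient hdiff hlip x (-(γ • u ω))
    rw [← sub_eq_add_neg, inner_neg_right, real_inner_smul_right, norm_neg, norm_smul,
      mul_pow, Real.norm_eq_abs, sq_abs] at h
    linarith
  have hlin : Integrable (fun ω => f x - γ * ⟪gradient f x, u ω⟫) μ :=
    (integrable_const _).sub ((hu.const_inner _).const_mul γ)
  calc ∫ ω, f (x - γ • u ω) ∂μ
      ≤ ∫ ω, (f x - γ * ⟪gradient f x, u ω⟫ + γ ^ 2 * L / 2 * ‖u ω‖ ^ 2) ∂μ :=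
        integral_mono hf (hlin.add (hu₂.const_mul _)) hstep
    _ = _ := by
        rw [integral_add hlin (hu₂.const_mul _), integral_sub (integrable_const _)
          ((hu.const_inner _).const_mul γ), integral_const_mul, integral_const_mul,
          integral_inner hu, integral_const, probReal_univ, one_smul]

end LipschitzGradient

section Mask

variable {n : ℕ} (S : Finset (Fin n))

noncomputable def maskCLM : EuclideanSpace ℝ (Fin n) →L[ℝ] EuclideanSpace ℝ (Fin n) :=
  LinearMap.toContinuousLinearMap
    { toFun := mask S
      map_add' := fun x y => by ext i; by_cases hi : i ∈ S <;> simp [mask, hi]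
      map_smul' := fun c x => by ext i; by_cases hi : i ∈ S <;> simp [mask, hi] }

@[simp] theorem mask_mask (x : EuclideanSpace ℝ (Fin n)) : mask S (mask S x) = mask S x := by
  ext i; by_cases hi : i ∈ S <;> simp [mask, hi]

theorem inner_mask_left (x y : EuclideanSpace ℝ (Fin n)) :
    ⟪mask S x, y⟫ = ⟪x, mask S y⟫ := by
  simp only [PiLp.inner_apply, RCLike.inner_apply, conj_trivial]
  refine Finset.sum_congr rfl fun i _ => ?_
  by_cases hi : i ∈ S <;> simp [mask, hi]

theorem integral_mask {Ω : Type*} [MeasurableSpace Ω] {μ : Measure Ω}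
    {u : Ω → EuclideanSpace ℝ (Fin n)} (hu : Integrable u μ) :
    ∫ ω, mask S (u ω) ∂μ = mask S (∫ ω, u ω ∂μ) :=
  (maskCLM S).integral_comp_comm hu

end Mask

/-- Expected one-step descent inequality (before invoking the alignment
coefficient) for a masked stochastic gradient step on an `L`-smooth function. -/
theorem expected_masked_descent (n : ℕ) (f : EuclideanSpace ℝ (Fin n) → ℝ)
    (L : ℝ) (hL : 0 ≤ L) (hdiff : Differentiable ℝ f)
    (hlip : ∀ x y, ‖gradient f x - gradient f y‖ ≤ L * ‖x - y‖)
    (S : Finset (Fin n)) (Ω : Type*) [MeasurableSpace Ω]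
    (μ : Measure Ω) [IsProbabilityMeasure μ]
    (g : Ω → EuclideanSpace ℝ (Fin n))
    (x : EuclideanSpace ℝ (Fin n)) (γ σ : ℝ)
    (hg₁ : Integrable (fun ω => mask S (g ω)) μ)
    (hg₂ : Integrable (fun ω => ‖mask S (g ω)‖ ^ 2) μ)
    (hg₃ : Integrable (fun ω => f (x - γ • mask S (g ω))) μ)
    (d : EuclideanSpace ℝ (Fin n)) (hd : d = ∫ ω, mask S (g ω) ∂μ)
    (hvar : ∫ ω, ‖mask S (g ω) - d‖ ^ 2 ∂μ ≤ σ ^ 2) :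
    ∫ ω, f (x - γ • mask S (g ω)) ∂μ ≤
      f x - γ * (inner ℝ (mask S (gradient f x)) d : ℝ) +
        (γ ^ 2 * L / 2) * (‖d‖ ^ 2 + σ ^ 2) := by
  subst hd
  have hmean_masked : mask S (∫ ω, mask S (g ω) ∂μ) = ∫ ω, mask S (g ω) ∂μ := by
    simp_rw [← integral_mask S hg₁, mask_mask]
  have hsecond : ∫ ω, ‖mask S (g ω)‖ ^ 2 ∂μ ≤ ‖∫ ω, mask S (g ω) ∂μ‖ ^ 2 + σ ^ 2 := by
    rw [integral_norm_sub_integral_sq hg₁ hg₂] at hvar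
    linarith
  rw [inner_mask_left, hmean_masked]
  calc _ ≤ _ := integral_image_sub_smul_le hdiff hlip x γ hg₁ hg₂ hg₃
    _ ≤ _ := by gcongr
end

section
/- Let T : ℕ with T ≥ 1, let L > 0, σ > 0, F₀ > 0, and set γ := min (1 / L) (Real.sqrt (F₀ / (L * σ^2 * T))). Let F G : ℕ → ℝ with F 0 = F₀, F t ≥ 0 for all t ≤ T, and F (t+1) ≤ F t - (γ / 2) * G t + (γ^2 * L / 2) * σ^2 for every t < T. Then (1 / T) * ∑_{t=0}^{T-1} G t ≤ 2 * F₀ * L / T + 3 * Real.sqrt (F₀ * L * σ^2 / T). -/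
/-!
Summing the one-step inequality telescopes to `(γ/2) ∑ G ≤ F₀ + T γ² L σ² / 2` (using `F T ≥ 0`),
so the average is at most `2 F₀ / (γ T) + γ L σ²`. The step size balances the two terms: the
second is at most `√(F₀ L σ² / T)` since `γ ≤ √(F₀ / (L σ² T))`, and the first is `2 F₀ L / T`
when `γ = 1 / L` and `2 √(F₀ L σ² / T)` otherwise.
-/

open Finset Real

section Descent

variable {𝕜 : Type*} [Field 𝕜] [LinearOrder 𝕜] [IsStrictOrderedRing 𝕜]

lemma sum_mul_le_of_descent {F G : ℕ → 𝕜} {T : ℕ} {a b : 𝕜}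
    (hstep : ∀ t < T, F (t + 1) ≤ F t - a * G t + b) :
    a * ∑ t ∈ range T, G t ≤ F 0 - F T + T * b := by
  have hterm : ∀ t ∈ range T, a * G t ≤ (F t - F (t + 1)) + b := fun t ht => by
    linarith [hstep t (mem_range.1 ht)]
  calc a * ∑ t ∈ range T, G t = ∑ t ∈ range T, a * G t := mul_sum _ _ _
    _ ≤ ∑ t ∈ range T, ((F t - F (t + 1)) + b) := sum_le_sum hterm
    _ = F 0 - F T + T * b := by
      rw [sum_add_distrib, sum_range_sub' F, sum_const, card_range, nsmul_eq_mul]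

lemma average_le_of_descent {F G : ℕ → 𝕜} {T : ℕ} {a b : 𝕜} (hT : 0 < T) (ha : 0 < a)
    (hFT : 0 ≤ F T) (hstep : ∀ t < T, F (t + 1) ≤ F t - a * G t + b) :
    (1 / (T : 𝕜)) * ∑ t ∈ range T, G t ≤ F 0 / (a * T) + b / a := by
  have hT' : (0 : 𝕜) < T := by exact_mod_cast hT
  calc (1 / (T : 𝕜)) * ∑ t ∈ range T, G t = (1 / (a * T)) * (a * ∑ t ∈ range T, G t) := by
        field_simp
    _ ≤ (1 / (a * T)) * (F 0 + T * b) := by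
        gcongr
        linarith [sum_mul_le_of_descent hstep]
    _ = F 0 / (a * T) + b / a := by field_simp

end Descent

lemma sqrt_div_mul_self {D c : ℝ} (hc : 0 ≤ c) : √(D / c) * c = √(D * c) := by
  rcases hc.eq_or_lt with rfl | hc
  · simp
  rw [sqrt_div' D hc.le, sqrt_mul' D hc.le]
  field_simp
  rw [sq_sqrt hc.le]

lemma div_sqrt_div {D c : ℝ} (hD : 0 ≤ D) (hc : 0 ≤ c) : D / √(D / c) = √(D * c) := by
  rcases hD.eq_or_lt with rfl | hD
  · simp
  rcases hc.eq_or_lt with rfl | hc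
  · simp
  rw [sqrt_div hD.le, sqrt_mul hD.le]
  field_simp
  rw [sq_sqrt hD.le]

lemma two_mul_div_add_mul_le_of_eq_min {L D c γ : ℝ} (hL : 0 ≤ L) (hD : 0 ≤ D) (hc : 0 ≤ c)
    (hγ : γ = min (1 / L) √(D / c)) :
    2 * D / γ + γ * c ≤ 2 * D * L + 3 * √(D * c) := by
  have hvar : γ * c ≤ √(D * c) := by
    rw [← sqrt_div_mul_self hc]
    exact mul_le_mul_of_nonneg_right (hγ ▸ min_le_right _ _) hc
  have hbias : 2 * D / γ ≤ 2 * D * L + 2 * √(D * c) := by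
    rcases min_choice (1 / L) √(D / c) with h | h <;> rw [hγ, h]
    · rw [div_div_eq_mul_div, div_one]
      linarith [sqrt_nonneg (D * c)]
    · rw [mul_div_assoc, div_sqrt_div hD hc]
      linarith [mul_nonneg (mul_nonneg zero_le_two hD) hL]
  linarith

/-- First part of Theorem 1 of ProgFed with the explicit step-size choice
`γ = min{1/L, √(F₀/(L σ² T))}`: the `1/T`-average of the weighted squared
masked subnetwork gradient norms converges at rate
`O(F₀ L / T + σ √(F₀ L / T))`. -/
theorem progfed_rate (T : ℕ) (hT : 1 ≤ T) (L σ F₀ : ℝ)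
    (hL : 0 < L) (hσ : 0 < σ) (hF₀ : 0 < F₀)
    (γ : ℝ) (hγ : γ = min (1 / L) (Real.sqrt (F₀ / (L * σ ^ 2 * T))))
    (F G : ℕ → ℝ) (hF0 : F 0 = F₀) (hF : ∀ t ≤ T, 0 ≤ F t)
    (hstep : ∀ t < T, F (t + 1) ≤ F t - (γ / 2) * G t + (γ ^ 2 * L / 2) * σ ^ 2) :
    (1 / (T : ℝ)) * ∑ t ∈ Finset.range T, G t ≤
      2 * F₀ * L / T + 3 * Real.sqrt (F₀ * L * σ ^ 2 / T) := by
  have hγ' : γ = min (1 / L) √(F₀ / T / (L * σ ^ 2)) := by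
    rw [hγ, div_div, mul_comm (T : ℝ)]
  have hγ0 : 0 < γ := hγ' ▸ lt_min (by positivity) (sqrt_pos.2 (by positivity))
  have havg := average_le_of_descent hT (half_pos hγ0) (hF T le_rfl) hstep
  have hrate := two_mul_div_add_mul_le_of_eq_min hL.le (by positivity) (by positivity) hγ'
  calc (1 / (T : ℝ)) * ∑ t ∈ range T, G t
      ≤ F 0 / (γ / 2 * T) + (γ ^ 2 * L / 2) * σ ^ 2 / (γ / 2) := havg
    _ = 2 * (F₀ / T) / γ + γ * (L * σ ^ 2) := by rw [hF0]; field_simp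
    _ ≤ 2 * (F₀ / T) * L + 3 * √(F₀ / T * (L * σ ^ 2)) := hrate
    _ = 2 * F₀ * L / T + 3 * √(F₀ * L * σ ^ 2 / T) := by ring_nf
end

section
/- Let n : ℕ, let f : EuclideanSpace ℝ (Fin n) → ℝ be differentiable, let T : ℕ with T ≥ 1, let ε ≥ 0, let x : ℕ → EuclideanSpace ℝ (Fin n), d : ℕ → EuclideanSpace ℝ (Fin n), and α : ℕ → ℝ with α t * ‖d t‖ > 0 for every t < T, and let q := the maximum over t < T of ‖gradient f (x t)‖ / (α t * ‖d t‖). If (1 / T) * ∑_{t=0}^{T-1} (α t)^2 * ‖d t‖^2 ≤ ε / q^2, then (1 / T) * ∑_{t=0}^{T-1} ‖gradient f (x t)‖^2 ≤ ε. -/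
/-!
Each full-model gradient norm is at most `q` times the weighted subnetwork gradient norm
`αₜ ‖dₜ‖`, because `q` is the largest of their ratios. Squaring and averaging, the averaged
squared full gradient is at most `q²` times the averaged squared subnetwork gradient, which is
at most `q² · (ε / q²) ≤ ε`.
-/

open Finset

lemma mul_div_le_of_nonneg {K : Type*} [Field K] [LinearOrder K] [IsStrictOrderedRing K]
    {a : K} (ha : 0 ≤ a) (b : K) : b * (a / b) ≤ a := by
  rcases eq_or_ne b 0 with rfl | hb
  · simpa using ha
  · rw [mul_div_cancel₀ a hb]

lemma le_sup'_div_mul {ι K : Type*} [Field K] [LinearOrder K] [IsStrictOrderedRing K]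
    {s : Finset ι} (hs : s.Nonempty) {g w : ι → K} {t : ι} (ht : t ∈ s) (hw : 0 < w t) :
    g t ≤ s.sup' hs (fun i => g i / w i) * w t :=
  (div_le_iff₀ hw).mp (le_sup' (fun i => g i / w i) ht)

lemma sum_sq_le_sq_mul_sum_sq {ι K : Type*} [Field K] [LinearOrder K] [IsStrictOrderedRing K]
    {s : Finset ι} {g w : ι → K} {q : K} (hg : ∀ t ∈ s, 0 ≤ g t)
    (hle : ∀ t ∈ s, g t ≤ q * w t) :
    ∑ t ∈ s, g t ^ 2 ≤ q ^ 2 * ∑ t ∈ s, w t ^ 2 := by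
  rw [mul_sum]
  refine sum_le_sum fun t ht => ?_
  calc g t ^ 2 ≤ (q * w t) ^ 2 := pow_le_pow_left₀ (hg t ht) (hle t ht) 2
    _ = q ^ 2 * w t ^ 2 := mul_pow q (w t) 2

/-- Second part of Theorem 1 of ProgFed: using `ε/q²` as the accuracy
threshold for the weighted masked subnetwork gradients yields an
`ε`-approximate stationary point of the full model in the averaged sense. -/
theorem progfed_full_model_convergence (n : ℕ)
    (f : EuclideanSpace ℝ (Fin n) → ℝ)
    (T : ℕ) (hT : 1 ≤ T) (ε : ℝ) (hε : 0 ≤ ε)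
    (x d : ℕ → EuclideanSpace ℝ (Fin n)) (α : ℕ → ℝ)
    (hpos : ∀ t < T, 0 < α t * ‖d t‖)
    (q : ℝ)
    (hq : q = (Finset.range T).sup'
      (Finset.nonempty_range_iff.mpr (by omega))
      (fun t => ‖gradient f (x t)‖ / (α t * ‖d t‖)))
    (hbound : (1 / (T : ℝ)) * ∑ t ∈ Finset.range T, (α t) ^ 2 * ‖d t‖ ^ 2 ≤
      ε / q ^ 2) :
    (1 / (T : ℝ)) * ∑ t ∈ Finset.range T, ‖gradient f (x t)‖ ^ 2 ≤ ε := by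
  have hgrad_le : ∀ t ∈ range T, ‖gradient f (x t)‖ ≤ q * (α t * ‖d t‖) := fun t ht =>
    hq ▸ le_sup'_div_mul (g := fun t => ‖gradient f (x t)‖) (w := fun t => α t * ‖d t‖) _ ht
      (hpos t (mem_range.mp ht))
  have hsum := sum_sq_le_sq_mul_sum_sq (fun t _ => norm_nonneg _) hgrad_le
  simp only [mul_pow] at hsum
  calc (1 / (T : ℝ)) * ∑ t ∈ range T, ‖gradient f (x t)‖ ^ 2
      ≤ (1 / (T : ℝ)) * (q ^ 2 * ∑ t ∈ range T, α t ^ 2 * ‖d t‖ ^ 2) := by gcongr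
    _ = q ^ 2 * ((1 / (T : ℝ)) * ∑ t ∈ range T, α t ^ 2 * ‖d t‖ ^ 2) := by ring
    _ ≤ q ^ 2 * (ε / q ^ 2) := by gcongr
    _ ≤ ε := mul_div_le_of_nonneg hε _
end
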